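/- arXiv:2411.01430 — 2 statements merged into one kernel-verified Lean document; each statement's English description precedes it below -/
import Mathlib

section
/- Let M and N be rectangle persistence modules with underlying rectangles (a₁,b₁)×(a₂,b₂) and (c₁,d₁)×(c₂,d₂). Then the interleaving distance satisfies d_I(M,N) ≤ max{ min_i (b_i−a_i)/2 , min_i (d_i−c_i)/2 }. -/
/-!
If an open rectangle has width at most `2ε` in some coordinate direction, no point `u` has both
`u` and `u + (2ε, …, 2ε)` inside it, so all `2ε`-transition maps of its rectangle module vanish.
Two modules whose `2ε`-transition maps vanish are `ε`-interleaved by the zero morphisms.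
-/

open Classical

noncomputable section

/-- A point of the parameter space `ℝⁿ`. -/
abbrev Pt (n : ℕ) := Fin n → ℝ

/-- Shift of a point by the diagonal vector `(ε, …, ε)`. -/
def shiftPt {n : ℕ} (u : Pt n) (ε : ℝ) : Pt n := fun i => u i + ε

lemma shiftPt_mono {n : ℕ} {u v : Pt n} (ε : ℝ) (h : u ≤ v) :
    shiftPt u ε ≤ shiftPt v ε := fun i => add_le_add (h i) le_rfl

lemma le_shiftPt {n : ℕ} (u : Pt n) {ε : ℝ} (hε : 0 ≤ ε) : u ≤ shiftPt u ε :=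
  fun i => le_add_of_nonneg_right hε

/-- An `n`-parameter persistence module over the field `k`. -/
structure PersMod (k : Type) [Field k] (n : ℕ) where
  obj : Pt n → Type
  [acg : ∀ u, AddCommGroup (obj u)]
  [mod : ∀ u, Module k (obj u)]
  map : ∀ {u v : Pt n}, u ≤ v → (obj u →ₗ[k] obj v)
  map_id : ∀ u : Pt n, map (le_refl u) = LinearMap.id
  map_comp : ∀ {u v w : Pt n} (h1 : u ≤ v) (h2 : v ≤ w),
    (map h2).comp (map h1) = map (h1.trans h2)

attribute [instance] PersMod.acg PersMod.mod

variable {k : Type} [Field k] {n : ℕ}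

/-- A morphism of persistence modules. -/
structure PersHom (M N : PersMod k n) where
  app : ∀ u, M.obj u →ₗ[k] N.obj u
  natural : ∀ {u v : Pt n} (h : u ≤ v),
    (app v).comp (M.map h) = (N.map h).comp (app u)

/-- A morphism is trivial when every component is the zero map. -/
def PersHom.Trivial {M N : PersMod k n} (f : PersHom M N) : Prop := ∀ u, f.app u = 0

/-- The `ε`-shift of a persistence module. -/
def PersMod.shift (M : PersMod k n) (ε : ℝ) : PersMod k n where
  obj u := M.obj (shiftPt u ε)
  map h := M.map (shiftPt_mono ε h)
  map_id u := M.map_id _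
  map_comp h1 h2 := M.map_comp _ _

/-- `(f, g)` is an `ε`-interleaving pair between `M` and `N`. -/
def IsInterleavingPair (M N : PersMod k n) (ε : ℝ) (hε : 0 ≤ ε)
    (f : PersHom M (N.shift ε)) (g : PersHom N (M.shift ε)) : Prop :=
  (∀ u : Pt n, (g.app (shiftPt u ε)).comp (f.app u) =
      M.map ((le_shiftPt u hε).trans (le_shiftPt _ hε))) ∧
  (∀ u : Pt n, (f.app (shiftPt u ε)).comp (g.app u) =
      N.map ((le_shiftPt u hε).trans (le_shiftPt _ hε)))

/-- `M` and `N` are `ε`-interleaved. -/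
def Interleaved (M N : PersMod k n) (ε : ℝ) : Prop :=
  ∃ (hε : 0 ≤ ε) (f : PersHom M (N.shift ε)) (g : PersHom N (M.shift ε)),
    IsInterleavingPair M N ε hε f g

/-- The interleaving distance, with value in the extended reals. -/
def interleavingDist (M N : PersMod k n) : EReal :=
  sInf {x : EReal | ∃ ε : ℝ, Interleaved M N ε ∧ x = (ε : EReal)}

/-- `M` is `ε`-trivial : all transition maps `M_u → M_{u+(ε,…,ε)}` vanish. -/
def EpsTrivial (M : PersMod k n) (ε : ℝ) : Prop :=
  ∀ (u : Pt n) (h : u ≤ shiftPt u ε), M.map h = 0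

/-- The zero persistence module. -/
def ZeroMod (k : Type) [Field k] (n : ℕ) : PersMod k n where
  obj _ := PUnit
  map _ := 0
  map_id _ := by apply LinearMap.ext; intro x; exact Subsingleton.elim _ _
  map_comp _ _ := by apply LinearMap.ext; intro x; exact Subsingleton.elim _ _

/-- The space at `u` of the interval module on `I` : all of `k` if `u ∈ I`, `0` otherwise. -/
def segSpace (k : Type) [Field k] {n : ℕ} (I : Set (Pt n)) (u : Pt n) : Submodule k k where
  carrier := {x | u ∉ I → x = 0}
  add_mem' := by intro x y hx hy h; simp only [Set.mem_setOf_eq] at *; rw [hx h, hy h, add_zero]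
  zero_mem' := fun _ => rfl
  smul_mem' := by intro c x hx h; simp only [Set.mem_setOf_eq] at *; rw [hx h, smul_zero]

/-- The interval persistence module on an order-convex set `I` : `k` on `I` with identity
internal transition maps, `0` elsewhere. -/
def IntervalMod (k : Type) [Field k] {n : ℕ} (I : Set (Pt n)) (hI : I.OrdConnected) :
    PersMod k n where
  obj u := segSpace k I u
  map {u v} h :=
    { toFun := fun x => ⟨if v ∈ I then (x : k) else 0, by intro hv; simp [hv]⟩
      map_add' := by intro x y; apply Subtype.ext; by_cases hv : v ∈ I <;> simp [hv]
      map_smul' := by intro c x; apply Subtype.ext; by_cases hv : v ∈ I <;> simp [hv] }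
  map_id u := by
    apply LinearMap.ext; intro x
    apply Subtype.ext
    by_cases hu : u ∈ I
    · simp [hu]
    · simp [hu, x.2 hu]
  map_comp {u v w} h1 h2 := by
    apply LinearMap.ext; intro x
    apply Subtype.ext
    by_cases hw : w ∈ I
    · by_cases hv : v ∈ I
      · simp [hw, hv]
      · by_cases hu : u ∈ I
        · exact absurd (hI.out hu hw ⟨h1, h2⟩) hv
        · simp [hw, hv, x.2 hu]
    · simp [hw]

/-- The open box `∏ᵢ (aᵢ, bᵢ)` with extended-real endpoints. -/
def box {n : ℕ} (a b : Fin n → EReal) : Set (Pt n) :=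
  {u | ∀ i, a i < (u i : EReal) ∧ (u i : EReal) < b i}

lemma box_ordConnected {n : ℕ} (a b : Fin n → EReal) : (box a b).OrdConnected := by
  constructor
  intro u hu w hw v hv i
  exact ⟨lt_of_lt_of_le (hu i).1 (by exact_mod_cast hv.1 i),
    lt_of_le_of_lt (by exact_mod_cast hv.2 i) (hw i).2⟩

/-- The rectangle persistence module with underlying open rectangle `∏ᵢ (aᵢ, bᵢ)`. -/
def RectMod (k : Type) [Field k] {n : ℕ} (a b : Fin n → EReal) : PersMod k n :=
  IntervalMod k (box a b) (box_ordConnected a b)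

/-- Subtraction of extended reals with the conventions `(±∞) − (±∞) = 0`. -/
def esub (x y : EReal) : EReal :=
  if (x = ⊤ ∧ y = ⊤) ∨ (x = ⊥ ∧ y = ⊥) then 0 else x - y

/-- Absolute value on the extended reals (`|±∞| = +∞`). -/
def eabs (x : EReal) : EReal := max x (-x)

/-- The `ℓ^∞`-distance `‖x − y‖_∞` on extended `ℝⁿ`. -/
def supDist {n : ℕ} (x y : Fin n → EReal) : EReal := ⨆ i, eabs (esub (x i) (y i))

/-- The closed formula for the interleaving distance between the rectangle modules with
rectangles `∏ (aᵢ, bᵢ)` and `∏ (cᵢ, dᵢ)`. -/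
def dIFormula {n : ℕ} (a b c d : Fin n → EReal) : EReal :=
  min (max (⨅ i, esub (b i) (a i) / 2) (⨅ i, esub (d i) (c i) / 2))
      (max (supDist c a) (supDist d b))

/-- `M` and `N` are isomorphic persistence modules. -/
def PersIso (M N : PersMod k n) : Prop :=
  ∃ f : PersHom M N, ∀ u, Function.Bijective (f.app u)

/-- `M` is a non-zero persistence module. -/
def PersMod.Nonzero (M : PersMod k n) : Prop := ∃ (u : Pt n) (x : M.obj u), x ≠ 0

/-- Direct sum of two persistence modules. -/
def dirSum (M N : PersMod k n) : PersMod k n where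
  obj u := M.obj u × N.obj u
  map h := (M.map h).prodMap (N.map h)
  map_id u := by
    apply LinearMap.ext; intro x
    show ((M.map (le_refl u)) x.1, (N.map (le_refl u)) x.2) = x
    rw [M.map_id, N.map_id]; rfl
  map_comp h1 h2 := by
    apply LinearMap.ext; intro x
    show ((M.map _) ((M.map _) x.1), (N.map _) ((N.map _) x.2))
      = ((M.map _) x.1, (N.map _) x.2)
    have hM : (M.map h2) ((M.map h1) x.1) = (M.map (h1.trans h2)) x.1 := by
      rw [← M.map_comp h1 h2]; rfl
    have hN : (N.map h2) ((N.map h1) x.2) = (N.map (h1.trans h2)) x.2 := by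
      rw [← N.map_comp h1 h2]; rfl
    rw [hM, hN]

/-- Zigzag-connectedness of a subset of `ℝⁿ`. -/
def ZigzagConnected {n : ℕ} (I : Set (Pt n)) : Prop :=
  ∀ u ∈ I, ∀ v ∈ I,
    Relation.ReflTransGen (fun x y => x ∈ I ∧ y ∈ I ∧ (x ≤ y ∨ y ≤ x)) u v

/-- `I` is an interval in `ℝⁿ`: nonempty, order-convex and zigzag-connected. -/
def IsInterval {n : ℕ} (I : Set (Pt n)) : Prop :=
  I.Nonempty ∧ I.OrdConnected ∧ ZigzagConnected I

/-- A partial multibijection `Fin m ⇸ Fin k'`, encoded by an `Option`-valued map that is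
injective on matched indices. -/
def PartialInj {m k' : ℕ} (σ : Fin m → Option (Fin k')) : Prop :=
  ∀ i j l, σ i = some l → σ j = some l → i = j

/-- `σ` is an `ε`-matching between the barcodes `A` and `B` (families of intervals). -/
def IsEpsMatching (k : Type) [Field k] {n m k' : ℕ}
    (A : Fin m → Set (Pt n)) (hA : ∀ i, (A i).OrdConnected)
    (B : Fin k' → Set (Pt n)) (hB : ∀ j, (B j).OrdConnected)
    (σ : Fin m → Option (Fin k')) (ε : ℝ) : Prop :=
  PartialInj σ ∧
  (∀ i, σ i = none → EpsTrivial (IntervalMod k (A i) (hA i)) (2 * ε)) ∧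
  (∀ j, (∀ i, σ i ≠ some j) → EpsTrivial (IntervalMod k (B j) (hB j)) (2 * ε)) ∧
  (∀ i j, σ i = some j →
    Interleaved (IntervalMod k (A i) (hA i)) (IntervalMod k (B j) (hB j)) ε)

/-- The bottleneck distance between the interval decomposable modules with barcodes
`A` and `B`. -/
def bottleneckDist (k : Type) [Field k] {n m k' : ℕ}
    (A : Fin m → Set (Pt n)) (hA : ∀ i, (A i).OrdConnected)
    (B : Fin k' → Set (Pt n)) (hB : ∀ j, (B j).OrdConnected) : EReal :=
  sInf {x : EReal | ∃ (ε : ℝ) (σ : Fin m → Option (Fin k')),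
    0 ≤ ε ∧ IsEpsMatching k A hA B hB σ ε ∧ x = (ε : EReal)}

lemma esub_eq_sub_of_lt {x y : EReal} (h : x < y) : esub y x = y - x :=
  if_neg (by rintro (⟨rfl, rfl⟩ | ⟨rfl, rfl⟩) <;> exact lt_irrefl _ h)

lemma EpsTrivial.map_eq_zero {M : PersMod k n} {δ : ℝ} (hM : EpsTrivial M δ) {u v : Pt n}
    (h : u ≤ v) (hv : v = shiftPt u δ) : M.map h = 0 := by
  subst hv
  exact hM u h

theorem interleaved_of_epsTrivial {M N : PersMod k n} {ε : ℝ} (hε : 0 ≤ ε)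
    (hM : EpsTrivial M (2 * ε)) (hN : EpsTrivial N (2 * ε)) : Interleaved M N ε := by
  have shift_shift (u : Pt n) : shiftPt (shiftPt u ε) ε = shiftPt u (2 * ε) := by
    funext i
    simp only [shiftPt]
    ring
  refine ⟨hε, ⟨fun _ => 0, fun _ => by simp⟩, ⟨fun _ => 0, fun _ => by simp⟩,
    fun u => ?_, fun u => ?_⟩
  · rw [hM.map_eq_zero _ (shift_shift u)]
    exact LinearMap.ext fun _ => rfl
  · rw [hN.map_eq_zero _ (shift_shift u)]
    exact LinearMap.ext fun _ => rfl

lemma interleavingDist_le_of_interleaved {M N : PersMod k n} {ε : ℝ} (h : Interleaved M N ε) :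
    interleavingDist M N ≤ ε :=
  sInf_le ⟨ε, h, rfl⟩

lemma IntervalMod.map_eq_zero {I : Set (Pt n)} (hI : I.OrdConnected) {u v : Pt n} (h : u ≤ v)
    (huv : u ∈ I → v ∉ I) : (IntervalMod k I hI).map h = 0 := by
  refine LinearMap.ext fun x => Subtype.ext ?_
  show (if v ∈ I then x.1 else 0) = 0
  split_ifs with hv
  · exact x.2 fun hu => huv hu hv
  · rfl

lemma IntervalMod.epsTrivial {I : Set (Pt n)} (hI : I.OrdConnected) {δ : ℝ}
    (h : ∀ u ∈ I, shiftPt u δ ∉ I) : EpsTrivial (IntervalMod k I hI) δ :=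
  fun u hu => IntervalMod.map_eq_zero hI hu (h u)

lemma shiftPt_notMem_box {a b : Fin n → EReal} {δ : ℝ} {i : Fin n} (hi : b i - a i ≤ δ)
    {u : Pt n} (hu : u ∈ box a b) : shiftPt u δ ∉ box a b := by
  intro hv
  have hδ : ((u i + δ : ℝ) : EReal) - (u i : ℝ) < b i - a i :=
    EReal.sub_lt_sub_of_le_of_gt (hv i).2.le (hu i).1 (EReal.coe_ne_top _) (ne_bot_of_gt (hv i).2)
  rw [← EReal.coe_sub, add_sub_cancel_left] at hδ
  exact hδ.not_ge hi

lemma RectMod.epsTrivial_of_sub_le {a b : Fin n → EReal} {δ : ℝ} (i : Fin n)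
    (hi : b i - a i ≤ δ) : EpsTrivial (RectMod k a b) δ :=
  IntervalMod.epsTrivial _ fun _ hu => shiftPt_notMem_box hi hu

lemma RectMod.epsTrivial_of_iInf_le [NeZero n] {a b : Fin n → EReal} (hab : ∀ i, a i < b i)
    {ε : ℝ} (h : ⨅ i, esub (b i) (a i) / 2 ≤ ε) : EpsTrivial (RectMod k a b) (2 * ε) := by
  obtain ⟨i, hi⟩ := exists_eq_ciInf_of_finite (f := fun i => esub (b i) (a i) / 2)
  rw [← hi, esub_eq_sub_of_lt (hab i), EReal.div_le_iff_le_mul two_pos (by decide)] at h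
  exact RectMod.epsTrivial_of_sub_le i (by exact_mod_cast h)

lemma iInf_esub_half_nonneg {a b : Fin n → EReal} (hab : ∀ i, a i < b i) :
    0 ≤ ⨅ i, esub (b i) (a i) / 2 :=
  le_iInf fun i => EReal.div_nonneg
    ((esub_eq_sub_of_lt (hab i)).symm ▸ (EReal.sub_pos.mpr (hab i)).le) zero_le_two

theorem interleavingDist_rectMod_le [NeZero n] {a b c d : Fin n → EReal}
    (hab : ∀ i, a i < b i) (hcd : ∀ i, c i < d i) :
    interleavingDist (RectMod k a b) (RectMod k c d) ≤
      max (⨅ i, esub (b i) (a i) / 2) (⨅ i, esub (d i) (c i) / 2) := by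
  set R := max (⨅ i, esub (b i) (a i) / 2) (⨅ i, esub (d i) (c i) / 2)
  have hR0 : 0 ≤ R := (iInf_esub_half_nonneg hab).trans (le_max_left _ _)
  obtain hR | hR := eq_or_ne R ⊤
  · exact hR ▸ le_top
  have hε : (R.toReal : EReal) = R := EReal.coe_toReal hR (ne_bot_of_le_ne_bot (by simp) hR0)
  rw [← hε]
  refine interleavingDist_le_of_interleaved
    (interleaved_of_epsTrivial (EReal.toReal_nonneg hR0) ?_ ?_)
  · exact RectMod.epsTrivial_of_iInf_le hab ((le_max_left _ _).trans hε.ge)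
  · exact RectMod.epsTrivial_of_iInf_le hcd ((le_max_right _ _).trans hε.ge)

theorem interleavingDist_le_max_min_halves_general (a b c d : Fin 2 → EReal)
    (hab : ∀ i, a i < b i) (hcd : ∀ i, c i < d i) :
    interleavingDist (RectMod k a b) (RectMod k c d) ≤
      max (⨅ i, esub (b i) (a i) / 2) (⨅ i, esub (d i) (c i) / 2) :=
  interleavingDist_rectMod_le hab hcd

theorem interleavingDist_le_max_min_halves (a b c d : Fin 2 → EReal)
    (ha : ∀ i, a i ≠ ⊤) (hb : ∀ i, b i ≠ ⊥)
    (hc : ∀ i, c i ≠ ⊤) (hd : ∀ i, d i ≠ ⊥) (hab : ∀ i, a i < b i) (hcd : ∀ i, c i < d i) :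
    interleavingDist (RectMod k a b) (RectMod k c d) ≤
      max (⨅ i, esub (b i) (a i) / 2) (⨅ i, esub (d i) (c i) / 2) :=
  interleavingDist_le_max_min_halves_general a b c d hab hcd

end
end

section
/- If M and N are rectangle persistence modules with rectangles (a₁,b₁)×(a₂,b₂) and (c₁,d₁)×(c₂,d₂) that are ε-interleaved via morphisms f: M → N(ε) and g: N → M(ε), and both f and g are non-trivial (nonzero), then ε ≥ max{ ‖c−a‖_∞ , ‖d−b‖_∞ }. -/
open Classical

noncomputable section

variable {k : Type} [Field k] {n : ℕ}

/-!
A nonzero morphism `f : M → N(ε)` of interval modules on `I` and `J` has a component `f_u ≠ 0`,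
so `u ∈ I` and `u + ε ∈ J`, and naturality propagates this. Going down from `u` inside `I` one
stays in `J - ε`, because the transition maps of `M` into `u` are onto; going up from `u` inside
`J - ε` one stays in `I`, because the transition maps of `N` inside `J` are injective. For
rectangles, sliding one coordinate of `u` towards the lower and the upper edges gives
`cᵢ ≤ aᵢ + ε` and `dᵢ ≤ bᵢ + ε`; the same argument for `g` gives the reverse inequalities.
-/

namespace PersHom

variable {M N : PersMod k n} {u v : Pt n}

lemma app_eq_zero_of_map_eq_zero (f : PersHom M N) (h : u ≤ v) (hM : M.map h = 0)
    (hN : Function.Injective (N.map h)) : f.app u = 0 := by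
  have : (N.map h).comp (f.app u) = 0 := by rw [← f.natural, hM, LinearMap.comp_zero]
  ext x
  exact hN (by simpa using LinearMap.congr_fun this x)

lemma app_eq_zero_of_map_surjective (f : PersHom M N) (h : u ≤ v)
    (hM : Function.Surjective (M.map h)) (hu : f.app u = 0) : f.app v = 0 := by
  have : (f.app v).comp (M.map h) = 0 := by rw [f.natural, hu, LinearMap.comp_zero]
  ext y
  obtain ⟨x, rfl⟩ := hM y
  simpa using LinearMap.congr_fun this x

end PersHom

namespace IntervalMod

variable {I : Set (Pt n)} {hI : I.OrdConnected} {u v : Pt n}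

lemma eq_zero_of_notMem (hu : u ∉ I) (x : (IntervalMod k I hI).obj u) : x = 0 :=
  Subtype.ext (x.2 hu)

lemma map_eq_zero_s9 (h : u ≤ v) (hv : v ∉ I) : (IntervalMod k I hI).map h = 0 :=
  LinearMap.ext fun _ => eq_zero_of_notMem hv _

lemma val_map (h : u ≤ v) (x : (IntervalMod k I hI).obj u) :
    ((IntervalMod k I hI).map h x).1 = if v ∈ I then x.1 else 0 :=
  rfl

lemma map_injective (h : u ≤ v) (hv : v ∈ I) :
    Function.Injective ((IntervalMod k I hI).map h) := fun x y hxy => by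
  have := congrArg Subtype.val hxy
  rw [val_map, val_map, if_pos hv, if_pos hv] at this
  exact Subtype.ext this

lemma map_surjective (h : u ≤ v) (hu : u ∈ I) :
    Function.Surjective ((IntervalMod k I hI).map h) := fun y =>
  ⟨⟨y.1, fun hu' => absurd hu hu'⟩, Subtype.ext <| (val_map h _).trans <| by
    split_ifs with hv
    · rfl
    · exact (y.2 hv).symm⟩

end IntervalMod

namespace PersHom

variable {I J : Set (Pt n)} {hI : I.OrdConnected} {hJ : J.OrdConnected} {ε : ℝ} {u v w : Pt n}
  {f : PersHom (IntervalMod k I hI) ((IntervalMod k J hJ).shift ε)}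

lemma mem_of_app_ne_zero (hf : f.app u ≠ 0) : u ∈ I ∧ shiftPt u ε ∈ J := by
  constructor
  · by_contra hu
    exact hf (LinearMap.ext fun x => by rw [IntervalMod.eq_zero_of_notMem hu x, map_zero]; rfl)
  · by_contra hu
    exact hf (LinearMap.ext fun x => IntervalMod.eq_zero_of_notMem (hI := hJ) hu _)

lemma mem_of_le_of_app_ne_zero (hf : f.app u ≠ 0) (huv : u ≤ v) (hv : shiftPt v ε ∈ J) :
    v ∈ I := by
  by_contra hvI
  exact hf (f.app_eq_zero_of_map_eq_zero huv (IntervalMod.map_eq_zero_s9 huv hvI)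
    (IntervalMod.map_injective (hI := hJ) (shiftPt_mono ε huv) hv))

lemma shiftPt_mem_of_le_of_app_ne_zero (hf : f.app u ≠ 0) (hwu : w ≤ u) (hw : w ∈ I) :
    shiftPt w ε ∈ J := by
  by_contra hwJ
  exact hf (f.app_eq_zero_of_map_surjective hwu (IntervalMod.map_surjective hwu hw)
    (LinearMap.ext fun _ => IntervalMod.eq_zero_of_notMem (hI := hJ) hwJ _))

end PersHom

lemma shiftPt_update (u : Pt n) (i : Fin n) (t ε : ℝ) :
    shiftPt (Function.update u i t) ε = Function.update (shiftPt u ε) i (t + ε) := by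
  ext j
  rcases eq_or_ne j i with rfl | hj
  · simp [shiftPt]
  · simp [shiftPt, Function.update_of_ne hj]

lemma update_mem_box_iff {a b : Fin n → EReal} {u : Pt n} (hu : u ∈ box a b) (i : Fin n)
    (t : ℝ) : Function.update u i t ∈ box a b ↔ a i < t ∧ (t : EReal) < b i := by
  refine ⟨fun h => by simpa using h i, fun ht j => ?_⟩
  rcases eq_or_ne j i with rfl | hj
  · simpa using ht
  · simpa [Function.update_of_ne hj] using hu j

namespace EReal

lemma coe_sub_add_cancel (s ε : ℝ) : ((s - ε : ℝ) : EReal) + ε = s := by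
  rw [← coe_add, _root_.sub_add_cancel]

lemma lt_coe_sub_iff {A : EReal} {s ε : ℝ} : A < ((s - ε : ℝ) : EReal) ↔ A + ε < s := by
  rw [coe_sub, EReal.lt_sub_iff_add_lt (.inl (coe_ne_bot ε)) (.inl (coe_ne_top ε))]

lemma le_add_of_forall_lt_add {A C : EReal} {ε p : ℝ} (hp : A < p)
    (h : ∀ t : ℝ, A < t → t ≤ p → C < t + ε) : C ≤ A + ε := by
  by_contra! hAC
  obtain ⟨s, hAs, hs⟩ := lt_iff_exists_real_btwn.1 (lt_min hAC (add_lt_add_right_coe hp ε))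
  rw [lt_min_iff, ← coe_add, EReal.coe_lt_coe_iff] at hs
  have hC := h (s - ε) (lt_coe_sub_iff.2 hAs) (by linarith)
  rw [coe_sub_add_cancel] at hC
  exact hC.not_gt hs.1

lemma le_add_of_forall_add_lt {B D : EReal} {ε p : ℝ} (hp : (p : EReal) + ε < D)
    (h : ∀ t : ℝ, p ≤ t → (t : EReal) + ε < D → (t : EReal) < B) : D ≤ B + ε := by
  by_contra! hBD
  obtain ⟨s, hs, hsD⟩ := lt_iff_exists_real_btwn.1 (max_lt hBD hp)
  rw [max_lt_iff, ← coe_add, EReal.coe_lt_coe_iff] at hs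
  have hB := h (s - ε) (by linarith) (by rwa [coe_sub_add_cancel])
  have := add_lt_add_right_coe hB ε
  rw [coe_sub_add_cancel] at this
  exact this.not_gt hs.1

end EReal

namespace PersHom

variable {a b c d : Fin n → EReal} {ε : ℝ}

theorem rectMod_le_add_of_not_trivial (f : PersHom (RectMod k a b) ((RectMod k c d).shift ε))
    (hf : ¬ f.Trivial) (i : Fin n) : c i ≤ a i + ε ∧ d i ≤ b i + ε := by
  obtain ⟨u, hfu⟩ : ∃ u, f.app u ≠ 0 := by simpa [PersHom.Trivial] using hf
  obtain ⟨hu, hu'⟩ := mem_of_app_ne_zero hfu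
  constructor
  · refine EReal.le_add_of_forall_lt_add (hu i).1 fun t hat htu => ?_
    have hw := shiftPt_mem_of_le_of_app_ne_zero hfu (update_le_self_iff.2 htu)
      ((update_mem_box_iff hu i t).2 ⟨hat, (EReal.coe_le_coe_iff.2 htu).trans_lt (hu i).2⟩)
    rw [shiftPt_update, update_mem_box_iff hu' i] at hw
    exact_mod_cast hw.1
  · have hud : (u i : EReal) + ε < d i := by exact_mod_cast (hu' i).2
    refine EReal.le_add_of_forall_add_lt hud fun t hut htd => ?_
    have hv : shiftPt (Function.update u i t) ε ∈ box c d := by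
      rw [shiftPt_update, update_mem_box_iff hu' i]
      refine ⟨(hu' i).1.trans_le ?_, by exact_mod_cast htd⟩
      exact_mod_cast add_le_add_left hut ε
    exact ((update_mem_box_iff hu i t).1
      (mem_of_le_of_app_ne_zero hfu (le_update_self_iff.2 hut) hv)).2

end PersHom

lemma eabs_esub_le {x y : EReal} {ε : ℝ} (hε : 0 ≤ ε) (hxy : x ≤ y + ε) (hyx : y ≤ x + ε) :
    eabs (esub x y) ≤ ε := by
  unfold esub
  split_ifs with hinf
  · simpa [eabs] using hε
  · push Not at hinf
    refine max_le (EReal.sub_le_of_le_add' hxy) ?_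
    rw [EReal.neg_sub (by tauto) (by tauto), add_comm, ← sub_eq_add_neg]
    exact EReal.sub_le_of_le_add' hyx

lemma supDist_le {x y : Fin n → EReal} {ε : ℝ} (hε : 0 ≤ ε)
    (h : ∀ i, x i ≤ y i + ε ∧ y i ≤ x i + ε) : supDist x y ≤ ε :=
  iSup_le fun i => eabs_esub_le hε (h i).1 (h i).2

theorem eps_ge_of_nontrivial_interleaving_general (a b c d : Fin 2 → EReal)
    (ε : ℝ) (hε : 0 ≤ ε)
    (f : PersHom (RectMod k a b) ((RectMod k c d).shift ε))
    (g : PersHom (RectMod k c d) ((RectMod k a b).shift ε))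
    (hf : ¬ f.Trivial) (hg : ¬ g.Trivial) :
    max (supDist c a) (supDist d b) ≤ (ε : EReal) := by
  have hf_le := f.rectMod_le_add_of_not_trivial hf
  have hg_le := g.rectMod_le_add_of_not_trivial hg
  exact max_le (supDist_le hε fun i => ⟨(hf_le i).1, (hg_le i).1⟩)
    (supDist_le hε fun i => ⟨(hf_le i).2, (hg_le i).2⟩)

theorem eps_ge_of_nontrivial_interleaving (a b c d : Fin 2 → EReal)
    (ha : ∀ i, a i ≠ ⊤) (hb : ∀ i, b i ≠ ⊥)
    (hc : ∀ i, c i ≠ ⊤) (hd : ∀ i, d i ≠ ⊥) (hab : ∀ i, a i < b i) (hcd : ∀ i, c i < d i)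
    (ε : ℝ) (hε : 0 ≤ ε)
    (f : PersHom (RectMod k a b) ((RectMod k c d).shift ε))
    (g : PersHom (RectMod k c d) ((RectMod k a b).shift ε))
    (hfg : IsInterleavingPair (RectMod k a b) (RectMod k c d) ε hε f g)
    (hf : ¬ f.Trivial) (hg : ¬ g.Trivial) :
    max (supDist c a) (supDist d b) ≤ (ε : EReal) :=
  eps_ge_of_nontrivial_interleaving_general a b c d ε hε f g hf hg

end
end
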